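/- Let F be a finite set with a distinguished base point o and at least two elements, and let X = F^ℤ with the product topology. Let H̃ be the subgroup of all f ∈ C(X,ℤ) such that f(x) depends only on the coordinates x(k) with k ≥ 0, and f(x) = 0 whenever x(0) = o. Then H̃ is a free ℤ-module with basis the set of functions χ_ε, where ε ranges over the elements of F^{(ℤ)} whose support is nonempty with minimum 0. -/

import Mathlib

open scoped Classical

/-- `Lamp F o` is `F^{(ℤ)}`: the set of functions `ℤ → F` equal to the base point `o`
at all but finitely many integers. -/
def Lamp (F : Type*) (o : F) : Type _ := {η : ℤ → F // {k : ℤ | η k ≠ o}.Finite}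

/-- The shift action: `(lampShift o n η) k = η (k - n)`, i.e. `αⁿ·η`. -/
def lampShift {F : Type*} (o : F) (n : ℤ) (η : Lamp F o) : Lamp F o :=
  ⟨fun k => η.1 (k - n),
    (η.2.image (· + n)).subset (fun k hk => ⟨k - n, hk, by ring⟩)⟩

/-- The clopen cylinder determined by `ε ∈ F^{(ℤ)}`:
`{x : ℤ → F | x k = ε k for all k in the support of ε}`. -/
def cyl {F : Type*} (o : F) (ε : Lamp F o) : Set (ℤ → F) :=
  {x | ∀ k : ℤ, ε.1 k ≠ o → x k = ε.1 k}

lemma isClopen_cyl {F : Type*} [TopologicalSpace F] [DiscreteTopology F] (o : F)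
    (ε : Lamp F o) : IsClopen (cyl o ε) := by
  have : cyl o ε = ⋂ k ∈ ε.2.toFinset, (fun x : ℤ → F => x k) ⁻¹' {ε.1 k} := by
    ext x
    simp [cyl, Set.Finite.mem_toFinset]
  rw [this]
  constructor
  · exact isClosed_biInter fun k _ =>
      IsClosed.preimage (continuous_apply k) (isClosed_discrete _)
  · exact isOpen_biInter_finset
      fun k _ => IsOpen.preimage (continuous_apply k) (isOpen_discrete _)

/-- The indicator function `χ_ε ∈ C(F^ℤ, ℤ)` of the clopen cylinder of `ε`. -/
noncomputable def chi {F : Type*} [TopologicalSpace F] [DiscreteTopology F] (o : F) (ε : Lamp F o) :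
    C(ℤ → F, ℤ) :=
  ⟨fun x => if x ∈ cyl o ε then 1 else 0, by
    apply Continuous.if
    · intro a ha
      have ha' : a ∈ frontier (cyl o ε) := ha
      rw [IsClopen.frontier_eq (isClopen_cyl o ε)] at ha'
      exact absurd ha' (Set.notMem_empty a)
    · exact continuous_const
    · exact continuous_const⟩

/-- `H̃`: the subgroup of `C(F^ℤ, ℤ)` of functions depending only on the coordinates
`x k` with `k ≥ 0` and vanishing on `{x | x 0 = o}`. -/
def Htilde (F : Type*) [TopologicalSpace F] [DiscreteTopology F] (o : F) :
    AddSubgroup C(ℤ → F, ℤ) where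
  carrier := {f | (∀ x y : ℤ → F, (∀ k : ℤ, 0 ≤ k → x k = y k) → f x = f y) ∧
    ∀ x : ℤ → F, x 0 = o → f x = 0}
  zero_mem' := ⟨fun _ _ _ => rfl, fun _ _ => rfl⟩
  add_mem' := by
    rintro f g ⟨hf1, hf2⟩ ⟨hg1, hg2⟩
    refine ⟨fun x y h => ?_, fun x hx => ?_⟩
    · simp [hf1 x y h, hg1 x y h]
    · simp [hf2 x hx, hg2 x hx]
  neg_mem' := by
    rintro f ⟨hf1, hf2⟩
    exact ⟨fun x y h => by simp [hf1 x y h], fun x hx => by simp [hf2 x hx]⟩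


section Aux

variable {F : Type*} [TopologicalSpace F] [DiscreteTopology F]

/-- The exact cylinder: all points agreeing with `w` on the finite window `s`. -/
def Ecyl (s : Finset ℤ) (w : ℤ → F) : Set (ℤ → F) := {x | ∀ k ∈ s, x k = w k}

lemma isClopen_Ecyl (s : Finset ℤ) (w : ℤ → F) : IsClopen (Ecyl s w) := by
  have : Ecyl s w = ⋂ k ∈ s, (fun x : ℤ → F => x k) ⁻¹' {w k} := by
    ext x; simp [Ecyl]
  rw [this]
  constructor
  · exact isClosed_biInter fun k _ =>
      IsClosed.preimage (continuous_apply k) (isClosed_discrete _)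
  · exact isOpen_biInter_finset
      fun k _ => IsOpen.preimage (continuous_apply k) (isOpen_discrete _)

/-- Indicator of the exact cylinder, as a continuous map. -/
noncomputable def EInd (s : Finset ℤ) (w : ℤ → F) : C(ℤ → F, ℤ) :=
  ⟨fun x => if x ∈ Ecyl s w then 1 else 0, by
    apply Continuous.if
    · intro a ha
      have ha' : a ∈ frontier (Ecyl s w) := ha
      rw [IsClopen.frontier_eq (isClopen_Ecyl s w)] at ha'
      exact absurd ha' (Set.notMem_empty a)
    · exact continuous_const
    · exact continuous_const⟩

lemma EInd_apply (s : Finset ℤ) (w : ℤ → F) (x : ℤ → F) :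
    EInd s w x = if x ∈ Ecyl s w then 1 else 0 := rfl

lemma chi_apply (o : F) (ε : Lamp F o) (x : ℤ → F) :
    chi o ε x = if x ∈ cyl o ε then 1 else 0 := rfl

/-- Any continuous map from the product to `ℤ` depends on finitely many coordinates. -/
lemma exists_finset_dep [Finite F] (f : C(ℤ → F, ℤ)) :
    ∃ s : Finset ℤ, ∀ x y : ℤ → F, (∀ k ∈ s, x k = y k) → f x = f y := by
  have H : ∀ x : ℤ → F, ∃ I : Finset ℤ, Ecyl I x ⊆ f ⁻¹' {f x} := by
    intro x
    have hopen : IsOpen (f ⁻¹' {f x}) := (isOpen_discrete _).preimage f.continuous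
    rcases (isOpen_pi_iff).1 hopen x rfl with ⟨I, u, hu, hsub⟩
    refine ⟨I, fun y hy => hsub fun k hk => ?_⟩
    rw [hy k hk]
    exact (hu k hk).2
  choose I hI using H
  have hcov : (Set.univ : Set (ℤ → F)) ⊆ ⋃ x, Ecyl (I x) x :=
    fun x _ => Set.mem_iUnion.2 ⟨x, fun k _ => rfl⟩
  obtain ⟨t, ht⟩ := isCompact_univ.elim_finite_subcover _
    (fun x => (isClopen_Ecyl (I x) x).2) hcov
  refine ⟨t.sup I, fun x y hxy => ?_⟩
  rcases Set.mem_iUnion₂.1 (ht (Set.mem_univ x)) with ⟨z, hz, hxz⟩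
  have hsub : I z ⊆ t.sup I := Finset.le_sup hz
  have hyz : y ∈ Ecyl (I z) z := fun k hk => by
    rw [← hxy k (hsub hk)]; exact hxz k hk
  have h1 : f x = f z := hI z hxz
  have h2 : f y = f z := hI z hyz
  rw [h1, h2]

/-- Inclusion–exclusion: the indicator of an exact cylinder lies in the span of the `chi`'s
whose support is inside the window and which agree with `w` wherever `w` is not `o`. -/
lemma EInd_mem_span (o : F) [Finite F] :
    ∀ (n : ℕ) (s : Finset ℤ) (w : ℤ → F), (s.filter (fun k => w k = o)).card = n →
    EInd s w ∈ Submodule.span ℤ {g : C(ℤ → F, ℤ) | ∃ ε : Lamp F o,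
      g = chi o ε ∧ (∀ k, ε.1 k ≠ o → k ∈ s) ∧ (∀ k ∈ s, w k ≠ o → ε.1 k = w k)} := by
  intro n
  induction n using Nat.strong_induction_on with
  | _ n ih =>
  intro s w hn
  by_cases hex : ∃ k ∈ s, w k = o
  · obtain ⟨k₀, hk₀s, hk₀o⟩ := hex
    haveI := Fintype.ofFinite F
    have hk₀f : k₀ ∈ s.filter (fun k => w k = o) := Finset.mem_filter.2 ⟨hk₀s, hk₀o⟩
    have hnpos : 0 < n := hn ▸ Finset.card_pos.2 ⟨k₀, hk₀f⟩
    have key : EInd s w = EInd (s.erase k₀) w -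
        ∑ a ∈ Finset.univ.filter (fun a : F => a ≠ o), EInd s (Function.update w k₀ a) := by
      ext x
      simp only [ContinuousMap.sub_apply, ContinuousMap.sum_apply, EInd_apply]
      by_cases hE : x ∈ Ecyl (s.erase k₀) w
      · have hsw : x ∈ Ecyl s w ↔ x k₀ = o := by
          constructor
          · intro h; rw [h k₀ hk₀s]; exact hk₀o
          · intro h k hk
            rcases eq_or_ne k k₀ with rfl | hne
            · rw [h, hk₀o]
            · exact hE k (Finset.mem_erase.2 ⟨hne, hk⟩)
        have hterm : ∀ a ∈ Finset.univ.filter (fun a : F => a ≠ o),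
            ((if x ∈ Ecyl s (Function.update w k₀ a) then 1 else 0 : ℤ)
              = if a = x k₀ then 1 else 0) := by
          intro a ha
          have : x ∈ Ecyl s (Function.update w k₀ a) ↔ a = x k₀ := by
            constructor
            · intro h; rw [h k₀ hk₀s]; simp [Function.update]
            · intro h k hk
              rcases eq_or_ne k k₀ with rfl | hne
              · simp [Function.update, ← h]
              · simp only [Function.update, dif_neg hne]
                exact hE k (Finset.mem_erase.2 ⟨hne, hk⟩)
          simp [this]
        rw [Finset.sum_congr rfl hterm, Finset.sum_ite_eq' _ (x k₀) (fun _ => (1 : ℤ))]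
        by_cases hx0 : x k₀ = o
        · simp [hsw.2 hx0, if_pos hE, hx0]
        · have : ¬ x ∈ Ecyl s w := fun h => hx0 (hsw.1 h)
          simp [this, if_pos hE, hx0]
      · have h1 : ¬ x ∈ Ecyl s w := fun h => hE (fun k hk => h k (Finset.mem_of_mem_erase hk))
        have h2 : ∀ a ∈ Finset.univ.filter (fun a : F => a ≠ o),
            ((if x ∈ Ecyl s (Function.update w k₀ a) then 1 else 0 : ℤ) = 0) := by
          intro a _
          rw [if_neg]
          intro h
          apply hE
          intro k hk
          have hne : k ≠ k₀ := (Finset.mem_erase.1 hk).1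
          have := h k (Finset.mem_of_mem_erase hk)
          rwa [Function.update, dif_neg hne] at this
        rw [Finset.sum_congr rfl h2]
        simp [h1, hE]
    rw [key]
    refine sub_mem ?_ (Submodule.sum_mem _ fun a ha => ?_)
    · have hcard : ((s.erase k₀).filter (fun k => w k = o)).card < n := by
        rw [← hn]
        apply Finset.card_lt_card
        rw [Finset.ssubset_iff_of_subset
          (Finset.filter_subset_filter _ (Finset.erase_subset _ _))]
        exact ⟨k₀, hk₀f, by simp⟩
      have := ih _ hcard (s.erase k₀) w rfl
      refine Submodule.span_mono ?_ this
      rintro g ⟨ε, rfl, hε1, hε2⟩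
      exact ⟨ε, rfl, fun k hk => Finset.mem_of_mem_erase (hε1 k hk),
        fun k hk hwk => hε2 k (Finset.mem_erase.2 ⟨fun h => hwk (h ▸ hk₀o), hk⟩) hwk⟩
    · have hane : a ≠ o := (Finset.mem_filter.1 ha).2
      have hfil : s.filter (fun k => Function.update w k₀ a k = o)
          = (s.filter (fun k => w k = o)).erase k₀ := by
        ext k
        rcases eq_or_ne k k₀ with rfl | hne
        · simp [Function.update, hane]
        · simp [Function.update, dif_neg hne, hne, Finset.mem_erase, Finset.mem_filter,
            and_comm]
      have hcard : (s.filter (fun k => Function.update w k₀ a k = o)).card < n := by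
        rw [hfil, Finset.card_erase_of_mem hk₀f, hn]
        exact Nat.sub_lt hnpos one_pos
      have := ih _ hcard s (Function.update w k₀ a) rfl
      refine Submodule.span_mono ?_ this
      rintro g ⟨ε, rfl, hε1, hε2⟩
      refine ⟨ε, rfl, hε1, fun k hk hwk => ?_⟩
      have hne : k ≠ k₀ := fun h => hwk (h ▸ hk₀o)
      have := hε2 k hk (by rwa [Function.update, dif_neg hne])
      rwa [Function.update, dif_neg hne] at this
  · push_neg at hex
    refine Submodule.subset_span ?_
    have hfin : {k : ℤ | (if k ∈ s then w k else o) ≠ o}.Finite := by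
      apply s.finite_toSet.subset
      intro k hk
      simp only [Set.mem_setOf_eq] at hk
      by_cases hks : k ∈ s
      · exact Finset.mem_coe.2 hks
      · simp [hks] at hk
    refine ⟨⟨fun k => if k ∈ s then w k else o, hfin⟩, ?_, ?_, ?_⟩
    · ext x
      simp only [EInd_apply, chi_apply]
      congr 1
      simp only [eq_iff_iff]
      constructor
      · intro h k hk
        by_cases hks : k ∈ s
        · simp only [if_pos hks] at hk ⊢
          exact h k hks
        · simp [hks] at hk
      · intro h k hk
        have hwk : w k ≠ o := hex k hk
        have := h k (by simp [hk, hwk])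
        simpa [hk] using this
    · intro k hk
      by_contra hks
      simp [hks] at hk
    · intro k hk _
      simp [hk]

/-- `pat o s w`: the point of `F^ℤ` given by `w` on `s` and `o` elsewhere. -/
def pat (o : F) (s : Finset ℤ) (w : {k // k ∈ s} → F) : ℤ → F :=
  fun k => if h : k ∈ s then w ⟨k, h⟩ else o

lemma chi_mem_Htilde (o : F) (ε : Lamp F o) (h0 : ε.1 0 ≠ o) (hneg : ∀ k < 0, ε.1 k = o) :
    chi o ε ∈ Htilde F o := by
  have hk0 : ∀ k : ℤ, ε.1 k ≠ o → 0 ≤ k := by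
    intro k hk
    by_contra h
    exact hk (hneg k (lt_of_not_ge h))
  constructor
  · intro x y hxy
    have hiff : x ∈ cyl o ε ↔ y ∈ cyl o ε := by
      constructor <;> intro h k hk
      · rw [← hxy k (hk0 k hk)]; exact h k hk
      · rw [hxy k (hk0 k hk)]; exact h k hk
    simp only [chi_apply, hiff]
  · intro x hx
    rw [chi_apply, if_neg]
    intro h
    exact h0 ((h 0 h0).symm.trans hx)

lemma chi_linearIndependent (o : F) :
    LinearIndependent ℤ (fun ε : Lamp F o => chi o ε) := by
  rw [linearIndependent_iff]
  intro l hl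
  by_contra hne
  obtain ⟨ε, hεs, hmin⟩ := l.support.exists_min_image (fun ε => ε.2.toFinset.card)
    (Finsupp.support_nonempty_iff.2 hne)
  have hself : ε.1 ∈ cyl o ε := fun k _ => rfl
  have heval : ∀ i ∈ l.support, i ≠ ε → l i * (chi o i) ε.1 = 0 := by
    intro i hi hine
    rw [chi_apply, if_neg, mul_zero]
    intro h
    apply hine
    have hsub : i.2.toFinset ⊆ ε.2.toFinset := by
      intro k hk
      rw [Set.Finite.mem_toFinset] at hk ⊢
      intro hek
      exact hk ((h k hk).symm.trans hek)
    have heq : i.2.toFinset = ε.2.toFinset :=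
      Finset.eq_of_subset_of_card_le hsub (hmin i hi)
    apply Subtype.ext
    funext k
    by_cases hik : i.1 k ≠ o
    · exact (h k hik).symm
    · push_neg at hik
      have hek : ε.1 k = o := by
        by_contra hek
        have hki : k ∈ i.2.toFinset := by
          rw [heq, Set.Finite.mem_toFinset]
          exact hek
        exact (Set.Finite.mem_toFinset _).1 hki hik
      rw [hik, hek]
  have hcalc : ((Finsupp.linearCombination ℤ (fun ε : Lamp F o => chi o ε)) l) ε.1 = l ε := by
    rw [Finsupp.linearCombination_apply, Finsupp.sum, ContinuousMap.sum_apply]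
    have hsm : ∀ i ∈ l.support, (l i • chi o i) ε.1 = l i * (chi o i) ε.1 := by
      intro i _
      simp
    rw [Finset.sum_congr rfl hsm, Finset.sum_eq_single ε heval (fun h => absurd hεs h)]
    rw [chi_apply, if_pos hself, mul_one]
  rw [hl] at hcalc
  simp only [ContinuousMap.zero_apply] at hcalc
  exact Finsupp.mem_support_iff.1 hεs hcalc.symm

lemma mem_span_chi (o : F) [Finite F] (f : C(ℤ → F, ℤ)) (hf : f ∈ Htilde F o) :
    f ∈ Submodule.span ℤ
      (Set.range fun ε : {ε : Lamp F o // ε.1 0 ≠ o ∧ ∀ k < 0, ε.1 k = o} => chi o ε.1) := by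
  obtain ⟨hf1, hf2⟩ := hf
  obtain ⟨s₀, hs₀⟩ := exists_finset_dep f
  set s : Finset ℤ := insert 0 (s₀.filter (fun k => 0 ≤ k)) with hsdef
  have hsnn : ∀ k ∈ s, (0:ℤ) ≤ k := by
    intro k hk
    rcases Finset.mem_insert.1 hk with rfl | hk
    · exact le_refl 0
    · exact (Finset.mem_filter.1 hk).2
  have h0s : (0:ℤ) ∈ s := Finset.mem_insert_self _ _
  have hdep : ∀ x y : ℤ → F, (∀ k ∈ s, x k = y k) → f x = f y := by
    intro x y hxy
    have h1 : f y = f (fun k => if 0 ≤ k then y k else x k) := by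
      apply hf1
      intro k hk
      simp [hk]
    have h2 : f x = f (fun k => if 0 ≤ k then y k else x k) := by
      apply hs₀
      intro k hk
      by_cases h : (0:ℤ) ≤ k
      · simp only [if_pos h]
        exact hxy k (Finset.mem_insert_of_mem (Finset.mem_filter.2 ⟨hk, h⟩))
      · simp [h]
    rw [h2, h1]
  haveI := Fintype.ofFinite F
  have hdec : f = ∑ w : {k // k ∈ s} → F, f (pat o s w) • EInd s (pat o s w) := by
    ext x
    set w₀ : {k // k ∈ s} → F := fun k => x k.1 with hw₀
    have hEw : ∀ w : {k // k ∈ s} → F,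
        (EInd s (pat o s w)) x = if w = w₀ then 1 else 0 := by
      intro w
      rw [EInd_apply]
      congr 1
      simp only [eq_iff_iff]
      constructor
      · intro h
        funext k
        have := h k.1 k.2
        rw [pat, dif_pos k.2] at this
        simp [hw₀, ← this]
      · rintro rfl k hk
        rw [pat, dif_pos hk]
    have hfx : f (pat o s w₀) = f x := by
      apply hdep
      intro k hk
      rw [pat, dif_pos hk]
    simp only [ContinuousMap.sum_apply, ContinuousMap.smul_apply, hEw, smul_eq_mul,
      mul_ite, mul_one, mul_zero]
    rw [Finset.sum_ite_eq' Finset.univ w₀ (fun w => f (pat o s w))]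
    simp [hfx]
  rw [hdec]
  refine Submodule.sum_mem _ fun w _ => ?_
  by_cases hw : pat o s w 0 = o
  · rw [hf2 _ hw, zero_smul]
    exact Submodule.zero_mem _
  · refine Submodule.smul_mem _ _ ?_
    refine Submodule.span_mono ?_ (EInd_mem_span o _ s (pat o s w) rfl)
    rintro g ⟨ε, rfl, hε1, hε2⟩
    have hε0 : ε.1 0 ≠ o := by
      rw [hε2 0 h0s hw]; exact hw
    have hεneg : ∀ k < 0, ε.1 k = o := by
      intro k hk
      by_contra h
      exact absurd (hsnn k (hε1 k h)) (not_le.2 hk)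
    exact ⟨⟨ε, hε0, hεneg⟩, rfl⟩

end Aux

/-- Let `F` be a finite set with base point `o` and at least two elements, and
let `X = F^ℤ` with the product topology (`F` discrete).  Let `H̃` be the subgroup of all
`f ∈ C(X,ℤ)` such that `f x` depends only on the coordinates `x k` with `k ≥ 0`, and
`f x = 0` whenever `x 0 = o`.  Then `H̃` is a free `ℤ`-module with basis the family of
indicator functions `χ_ε`, where `ε` ranges over the elements of `F^{(ℤ)}` whose support
is nonempty with minimum `0`. -/


theorem stmt9 (F : Type*) [Finite F] [Nontrivial F] [TopologicalSpace F] [DiscreteTopology F]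
    (o : F) :
    ∃ b : Module.Basis {ε : Lamp F o // ε.1 0 ≠ o ∧ ∀ k < 0, ε.1 k = o} ℤ
      (AddSubgroup.toIntSubmodule (Htilde F o)),
      ∀ ε, (b ε : C(ℤ → F, ℤ)) = chi o ε.1 := by
  classical
  set p := AddSubgroup.toIntSubmodule (Htilde F o) with hp
  set v : {ε : Lamp F o // ε.1 0 ≠ o ∧ ∀ k < 0, ε.1 k = o} → p := fun ε =>
    ⟨chi o ε.1, chi_mem_Htilde o ε.1 ε.2.1 ε.2.2⟩
    with hv
  have hli : LinearIndependent ℤ v := by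
    apply LinearIndependent.of_comp p.subtype
    exact (chi_linearIndependent o).comp
      (Subtype.val : _ → Lamp F o) Subtype.val_injective
  have hsp : ⊤ ≤ Submodule.span ℤ (Set.range v) := by
    intro x _
    have hx : (x : C(ℤ → F, ℤ)) ∈ Submodule.span ℤ
        (Set.range fun ε : {ε : Lamp F o // ε.1 0 ≠ o ∧ ∀ k < 0, ε.1 k = o} => chi o ε.1) :=
      mem_span_chi o x x.2
    have hrange : (Set.range fun ε : {ε : Lamp F o // ε.1 0 ≠ o ∧ ∀ k < 0, ε.1 k = o} =>
        chi o ε.1) = p.subtype '' Set.range v := by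
      rw [← Set.range_comp]
      rfl
    rw [hrange, ← Submodule.map_span] at hx
    obtain ⟨y, hy, hyx⟩ := hx
    rwa [show y = x from Subtype.ext hyx] at hy
  exact ⟨Module.Basis.mk hli hsp, fun ε => by rw [Module.Basis.mk_apply]⟩
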